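/- arXiv:2510.19720 — 3 statements merged into one kernel-verified Lean document; each statement's English description precedes it below -/
import Mathlib

section
/- Let F be a strongly convex Minkowski norm on E and L its Legendre map. Then the restriction of L to E \ {0} is a bijection from E \ {0} onto E \ {0}, and for every y ≠ 0 the map L is differentiable at y with invertible (Fréchet) derivative. -/
open RealInnerProductSpace Classical

/-- A strongly convex Minkowski norm on a real inner product space `E`:
continuous, nonnegative, smooth away from the origin, positively 1-homogeneous,
positive on nonzero vectors, and with positive definite Hessian of `½F²`
at every nonzero point. -/
structure StronglyConvexMinkowskiNorm (E : Type*) [NormedAddCommGroup E]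
    [InnerProductSpace ℝ E] where
  F : E → ℝ
  continuous : Continuous F
  nonneg : ∀ y : E, 0 ≤ F y
  smooth : ContDiffOn ℝ (⊤ : ℕ∞) F {(0 : E)}ᶜ
  homog : ∀ l : ℝ, 0 < l → ∀ y : E, F (l • y) = l * F y
  pos : ∀ y : E, y ≠ 0 → 0 < F y
  hess_posdef : ∀ y : E, y ≠ 0 → ∀ v : E, v ≠ 0 →
    0 < iteratedFDeriv ℝ 2 (fun z => (1 / 2) * F z ^ 2) y ![v, v]

/-- The Legendre map `L(y) = ∇(½F²)(y)` for `y ≠ 0`, with `L(0) = 0`. -/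
noncomputable def legendreMap {E : Type*} [NormedAddCommGroup E] [InnerProductSpace ℝ E]
    [FiniteDimensional ℝ E] (M : StronglyConvexMinkowskiNorm E) : E → E :=
  fun y => if y = 0 then 0 else gradient (fun z => (1 / 2) * M.F z ^ 2) y

namespace SCMNAux

variable {E : Type*} [NormedAddCommGroup E] [InnerProductSpace ℝ E] [FiniteDimensional ℝ E]
  (M : StronglyConvexMinkowskiNorm E)

/-- The energy function `½ F²`. -/
noncomputable def ff (M : StronglyConvexMinkowskiNorm E) : E → ℝ :=
  fun z => (1 / 2) * M.F z ^ 2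

lemma F_zero : M.F 0 = 0 := by
  have h := M.homog 2 (by norm_num) 0
  rw [smul_zero] at h
  linarith

lemma ff_zero : ff M 0 = 0 := by simp [ff, F_zero]

lemma ff_pos {y : E} (hy : y ≠ 0) : 0 < ff M y := by
  have := M.pos y hy
  unfold ff
  positivity

lemma ff_homog {l : ℝ} (hl : 0 < l) (y : E) : ff M (l • y) = l ^ 2 * ff M y := by
  unfold ff
  rw [M.homog l hl]
  ring

lemma ff_contDiffAt {y : E} (hy : y ≠ 0) : ContDiffAt ℝ 2 (ff M) y := by
  have h1 : ContDiff ℝ (⊤ : ℕ∞) (fun r : ℝ => (1 / 2) * r ^ 2) := by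
    exact contDiff_const.mul (contDiff_id.pow 2)
  have h2 : ContDiffOn ℝ (⊤ : ℕ∞) (ff M) {(0 : E)}ᶜ := h1.comp_contDiffOn M.smooth
  exact (h2.contDiffAt (isOpen_compl_singleton.mem_nhds hy)).of_le (WithTop.coe_le_coe.2 le_top)

lemma ff_hasFDerivAt {y : E} (hy : y ≠ 0) :
    HasFDerivAt (ff M) (fderiv ℝ (ff M) y) y :=
  (((ff_contDiffAt M hy).differentiableAt (by norm_num))).hasFDerivAt

lemma fderiv2_hasFDerivAt {y : E} (hy : y ≠ 0) :
    HasFDerivAt (fderiv ℝ (ff M)) (fderiv ℝ (fderiv ℝ (ff M)) y) y := by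
  have h : ContDiffAt ℝ 1 (fderiv ℝ (ff M)) y :=
    (ff_contDiffAt M hy).fderiv_right (by norm_num)
  exact (h.differentiableAt one_ne_zero).hasFDerivAt

lemma hess_pos {y v : E} (hy : y ≠ 0) (hv : v ≠ 0) :
    0 < fderiv ℝ (fderiv ℝ (ff M)) y v v := by
  have h := M.hess_posdef y hy v hv
  rw [iteratedFDeriv_two_apply] at h
  simp only [Matrix.cons_val_zero, Matrix.cons_val_one, Matrix.head_cons] at h
  exact h

lemma euler {y : E} (hy : y ≠ 0) : fderiv ℝ (ff M) y y = 2 * ff M y := by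
  have hdiff : HasFDerivAt (ff M) (fderiv ℝ (ff M) y) ((1 : ℝ) • y) := by
    rw [one_smul]; exact ff_hasFDerivAt M hy
  have hc : HasDerivAt (fun t : ℝ => t • y) ((1 : ℝ) • y) 1 :=
    (hasDerivAt_id (1 : ℝ)).smul_const y
  have h1 : HasDerivAt (fun t : ℝ => ff M (t • y)) (fderiv ℝ (ff M) y ((1 : ℝ) • y)) 1 :=
    hdiff.comp_hasDerivAt (f := fun t : ℝ => t • y) 1 hc
  rw [one_smul] at h1
  have h2 : HasDerivAt (fun t : ℝ => t ^ 2 * ff M y) (2 * ff M y) 1 := by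
    simpa using (hasDerivAt_pow 2 (1 : ℝ)).mul_const (ff M y)
  have heq : (fun t : ℝ => t ^ 2 * ff M y) =ᶠ[nhds 1] fun t : ℝ => ff M (t • y) := by
    filter_upwards [eventually_gt_nhds (by norm_num : (0 : ℝ) < 1)] with t ht
    exact (ff_homog M ht y).symm
  exact h1.unique (h2.congr_of_eventuallyEq heq.symm)

lemma inner_gradient (z v : E) : ⟪gradient (ff M) z, v⟫ = fderiv ℝ (ff M) z v :=
  InnerProductSpace.toDual_symm_apply

lemma legendreMap_eq {z : E} (hz : z ≠ 0) : legendreMap M z = gradient (ff M) z :=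
  if_neg hz

lemma inner_L_self {y : E} (hy : y ≠ 0) : ⟪legendreMap M y, y⟫ = 2 * ff M y := by
  rw [legendreMap_eq M hy, inner_gradient, euler M hy]

lemma L_ne_zero {y : E} (hy : y ≠ 0) : legendreMap M y ≠ 0 := by
  intro h
  have h1 := inner_L_self M hy
  rw [h, inner_zero_left] at h1
  have := ff_pos M hy
  linarith

lemma F_le : ∃ C : ℝ, 0 < C ∧ ∀ y : E, M.F y ≤ C * ‖y‖ := by
  have hcont : ContinuousAt M.F 0 := M.continuous.continuousAt
  obtain ⟨δ, hδ, hball⟩ := Metric.continuousAt_iff.1 hcont 1 one_pos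
  refine ⟨2 / δ, by positivity, fun y => ?_⟩
  rcases eq_or_ne y 0 with rfl | hy
  · simp [F_zero]
  · have hny : 0 < ‖y‖ := norm_pos_iff.2 hy
    set l : ℝ := δ / (2 * ‖y‖) with hl
    have hlpos : 0 < l := by positivity
    have hly : l * ‖y‖ = δ / 2 := by
      rw [hl]; field_simp
    have hdist : dist (l • y) 0 < δ := by
      rw [dist_zero_right, norm_smul, Real.norm_eq_abs, abs_of_pos hlpos, hly]
      linarith
    have h1 := hball hdist
    rw [F_zero, dist_zero_right, Real.norm_eq_abs, M.homog l hlpos,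
      abs_of_nonneg (mul_nonneg hlpos.le (M.nonneg y))] at h1
    have hl1 : l * (2 / δ * ‖y‖) = 1 := by
      rw [hl]; field_simp
    have h2 : l * M.F y < l * (2 / δ * ‖y‖) := by rw [hl1]; exact h1
    exact ((mul_lt_mul_iff_right₀ hlpos).1 h2).le

lemma ff_hasFDerivAt_zero : HasFDerivAt (ff M) (0 : E →L[ℝ] ℝ) 0 := by
  obtain ⟨C, hC, hFle⟩ := F_le M
  rw [hasFDerivAt_iff_isLittleO_nhds_zero]
  rw [Asymptotics.isLittleO_iff]
  intro c hc
  rw [Metric.eventually_nhds_iff]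
  refine ⟨2 * c / C ^ 2, by positivity, fun {h} hdist => ?_⟩
  rw [dist_zero_right, lt_div_iff₀ (by positivity : (0:ℝ) < C ^ 2)] at hdist
  simp only [zero_add, ff_zero, ContinuousLinearMap.zero_apply, sub_zero]
  have h1 : ‖ff M h‖ = (1 / 2) * M.F h ^ 2 := by
    rw [Real.norm_eq_abs, ff, abs_of_nonneg (by have := M.nonneg h; positivity)]
  rw [h1]
  have h2 : M.F h ≤ C * ‖h‖ := hFle h
  have h3 : 0 ≤ M.F h := M.nonneg h
  nlinarith [mul_le_mul h2 h2 h3 (by positivity : (0:ℝ) ≤ C * ‖h‖),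
    mul_le_mul_of_nonneg_right hdist.le (norm_nonneg h), norm_nonneg h]

lemma F_lower (x0 : E) (hx0 : x0 ≠ 0) : ∃ m : ℝ, 0 < m ∧ ∀ y : E, m * ‖y‖ ≤ M.F y := by
  have hs : IsCompact (Metric.sphere (0 : E) 1) := isCompact_sphere 0 1
  have hx0n : ‖x0‖ ≠ 0 := norm_ne_zero_iff.2 hx0
  have hne : (Metric.sphere (0 : E) 1).Nonempty := by
    refine ⟨‖x0‖⁻¹ • x0, ?_⟩
    simp [norm_smul, abs_of_nonneg (inv_nonneg.2 (norm_nonneg x0)), inv_mul_cancel₀ hx0n]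
  obtain ⟨z, hz, hmin⟩ := hs.exists_isMinOn hne M.continuous.continuousOn
  have hz1 : ‖z‖ = 1 := by simpa using hz
  have hzne : z ≠ 0 := by
    intro h; rw [h, norm_zero] at hz1; norm_num at hz1
  refine ⟨M.F z, M.pos z hzne, fun y => ?_⟩
  rcases eq_or_ne y 0 with rfl | hy
  · simp [F_zero]
  · have hny : 0 < ‖y‖ := norm_pos_iff.2 hy
    have hu : (‖y‖⁻¹ • y) ∈ Metric.sphere (0 : E) 1 := by
      simp [norm_smul, abs_of_nonneg (inv_nonneg.2 (norm_nonneg y)), inv_mul_cancel₀ hny.ne']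
    have h1 : M.F z ≤ M.F (‖y‖⁻¹ • y) := hmin hu
    have h2 : M.F y = ‖y‖ * M.F (‖y‖⁻¹ • y) := by
      conv_lhs => rw [← smul_inv_smul₀ hny.ne' y]
      rw [M.homog _ hny]
    rw [h2]
    nlinarith

/-- Injectivity of the Legendre map on nonzero vectors. -/
lemma L_injective {a b : E} (ha : a ≠ 0) (hb : b ≠ 0)
    (hab : legendreMap M a = legendreMap M b) : a = b := by
  by_contra hne
  set v : E := b - a with hv
  have hvne : v ≠ 0 := sub_ne_zero.2 (Ne.symm hne)
  by_cases hseg : ∀ t ∈ Set.Icc (0 : ℝ) 1, a + t • v ≠ 0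
  · -- segment avoids the origin: strict monotonicity of the derivative along it
    set ψ : ℝ → ℝ := fun t => fderiv ℝ (ff M) (a + t • v) v with hψdef
    have hγ : ∀ t : ℝ, HasDerivAt (fun s : ℝ => a + s • v) v t := by
      intro t
      simpa using ((hasDerivAt_id t).smul_const v).const_add a
    have hψ : ∀ t ∈ Set.Icc (0 : ℝ) 1,
        HasDerivAt ψ (fderiv ℝ (fderiv ℝ (ff M)) (a + t • v) v v) t := by
      intro t ht
      have hA := fderiv2_hasFDerivAt M (hseg t ht)
      have hcomp : HasDerivAt (fun s : ℝ => fderiv ℝ (ff M) (a + s • v))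
          (fderiv ℝ (fderiv ℝ (ff M)) (a + t • v) v) t := hA.comp_hasDerivAt t (hγ t)
      have := hcomp.clm_apply (hasDerivAt_const t v)
      simpa using this
    have hcont : ContinuousOn ψ (Set.Icc (0 : ℝ) 1) := fun t ht =>
      ((hψ t ht).continuousAt).continuousWithinAt
    have hmono : StrictMonoOn ψ (Set.Icc (0 : ℝ) 1) := by
      refine strictMonoOn_of_deriv_pos (convex_Icc 0 1) hcont ?_
      intro t ht
      rw [interior_Icc] at ht
      rw [(hψ t (Set.mem_Icc_of_Ioo ht)).deriv]
      exact hess_pos M (hseg t (Set.mem_Icc_of_Ioo ht)) hvne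
    have hlt : ψ 0 < ψ 1 :=
      hmono (Set.left_mem_Icc.2 (by norm_num)) (Set.right_mem_Icc.2 (by norm_num)) one_pos
    have h0 : ψ 0 = ⟪legendreMap M a, v⟫ := by
      rw [hψdef]
      simp only [zero_smul, add_zero]
      rw [legendreMap_eq M ha, inner_gradient]
    have h1 : ψ 1 = ⟪legendreMap M b, v⟫ := by
      rw [hψdef]
      simp only [one_smul, hv, add_sub_cancel]
      rw [legendreMap_eq M hb, inner_gradient]
    rw [h0, h1, hab] at hlt
    exact lt_irrefl _ hlt
  · -- segment passes through the origin: `a` and `b` point in opposite directions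
    push_neg at hseg
    obtain ⟨t, ht, hteq⟩ := hseg
    have ht0 : t ≠ 0 := by
      intro h; rw [h] at hteq; simp at hteq; exact ha hteq
    have ht1 : t ≠ 1 := by
      intro h; rw [h, one_smul, hv] at hteq
      rw [show a + (b - a) = b by abel] at hteq
      exact hb hteq
    have htpos : 0 < t := lt_of_le_of_ne ht.1 (Ne.symm ht0)
    have htlt : t < 1 := lt_of_le_of_ne ht.2 ht1
    -- a = -(t/(1-t)) • b
    have ha_eq : a = (-(t / (1 - t))) • b := by
      have h1 : (1 - t) • a = -(t • b) := by
        have : a + t • (b - a) = 0 := hteq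
        rw [smul_sub] at this
        have h2 : (1 - t) • a + t • b = 0 := by
          rw [sub_smul, one_smul]
          rw [← this]; abel
        linear_combination (norm := module) h2
      have h3 : (1 - t) ≠ 0 := by intro h; rw [sub_eq_zero] at h; exact ht1 h.symm
      have := congrArg (fun w => (1 - t)⁻¹ • w) h1
      simp only [inv_smul_smul₀ h3] at this
      rw [this, smul_neg, smul_smul, neg_smul, div_eq_inv_mul]
    have hLa : ⟪legendreMap M a, a⟫ = 2 * ff M a := inner_L_self M ha
    have hLb : ⟪legendreMap M a, a⟫ = (-(t / (1 - t))) * (2 * ff M b) := by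
      rw [hab]
      conv_lhs => rw [ha_eq]
      rw [real_inner_smul_right, inner_L_self M hb]
    have hffa := ff_pos M ha
    have hffb := ff_pos M hb
    have hfrac : 0 < t / (1 - t) := div_pos htpos (by linarith)
    nlinarith [hLa, hLb]

/-- Surjectivity of the Legendre map onto nonzero vectors. -/
lemma L_surjective {ξ : E} (hξ : ξ ≠ 0) : ∃ y : E, y ≠ 0 ∧ legendreMap M y = ξ := by
  obtain ⟨m, hm, hFlow⟩ := F_lower M ξ hξ
  set g : E → ℝ := fun y => ⟪ξ, y⟫ - ff M y with hg
  have hgcont : Continuous g :=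
    (continuous_const.inner continuous_id).sub (continuous_const.mul (M.continuous.pow 2))
  have hg0 : g 0 = 0 := by simp [hg, ff_zero]
  have hξn : 0 < ‖ξ‖ := norm_pos_iff.2 hξ
  set R : ℝ := 2 * ‖ξ‖ / m ^ 2 + 1 with hR
  have hRpos : 0 < R := by positivity
  have hout : ∀ y : E, R ≤ ‖y‖ → g y < 0 := by
    intro y hyR
    have hyR' := hyR
    rw [hR] at hyR'
    have h1 : ⟪ξ, y⟫ ≤ ‖ξ‖ * ‖y‖ := real_inner_le_norm ξ y
    have h2 : (m ^ 2 / 2) * ‖y‖ ^ 2 ≤ ff M y := by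
      have := hFlow y
      have hFy := M.nonneg y
      rw [ff]
      nlinarith [norm_nonneg y, mul_le_mul this this (by positivity : (0:ℝ) ≤ m * ‖y‖) hFy]
    have hyn : 0 < ‖y‖ := lt_of_lt_of_le hRpos hyR
    have h3 : 2 * ‖ξ‖ / m ^ 2 < ‖y‖ := by linarith
    rw [div_lt_iff₀ (by positivity)] at h3
    show ⟪ξ, y⟫ - ff M y < 0
    nlinarith [mul_lt_mul_of_pos_left h3 hyn]
  have hcomp : IsCompact (Metric.closedBall (0 : E) R) := isCompact_closedBall 0 R
  have hne : (Metric.closedBall (0 : E) R).Nonempty :=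
    ⟨0, Metric.mem_closedBall_self hRpos.le⟩
  obtain ⟨y₀, hy₀mem, hmax⟩ := hcomp.exists_isMaxOn hne hgcont.continuousOn
  have h00 : (0 : E) ∈ Metric.closedBall (0 : E) R := Metric.mem_closedBall_self hRpos.le
  have hglob : ∀ y : E, g y ≤ g y₀ := by
    intro y
    by_cases hy : y ∈ Metric.closedBall (0 : E) R
    · exact hmax hy
    · have : R < ‖y‖ := by
        rw [Metric.mem_closedBall, dist_zero_right, not_le] at hy
        exact hy
      have hneg := hout y this.le
      have h0le : (0:ℝ) ≤ g y₀ := by rw [← hg0]; exact hmax h00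
      linarith
  have hlocmax : IsLocalMax g y₀ := Filter.Eventually.of_forall hglob
  have hinner : HasFDerivAt (fun z : E => ⟪ξ, z⟫) (innerSL ℝ ξ) y₀ :=
    (innerSL ℝ ξ).hasFDerivAt
  by_cases hy₀ : y₀ = 0
  · exfalso
    subst hy₀
    have hgd : HasFDerivAt g (innerSL ℝ ξ - 0) 0 := hinner.sub (ff_hasFDerivAt_zero M)
    have h0 := hlocmax.hasFDerivAt_eq_zero hgd
    rw [sub_zero] at h0
    have : (innerSL ℝ ξ) ξ = 0 := by rw [h0]; rfl
    rw [innerSL_apply_apply] at this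
    · exact hξ (inner_self_eq_zero.1 this)
  · have hffd : HasFDerivAt (ff M) (fderiv ℝ (ff M) y₀) y₀ := ff_hasFDerivAt M hy₀
    have hgd : HasFDerivAt g (innerSL ℝ ξ - fderiv ℝ (ff M) y₀) y₀ := hinner.sub hffd
    have h0 := hlocmax.hasFDerivAt_eq_zero hgd
    have heq : fderiv ℝ (ff M) y₀ = innerSL ℝ ξ := by
      rw [sub_eq_zero] at h0; exact h0.symm
    refine ⟨y₀, hy₀, ?_⟩
    rw [legendreMap_eq M hy₀]
    show (InnerProductSpace.toDual ℝ E).symm (fderiv ℝ (ff M) y₀) = ξ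
    rw [heq]
    refine ext_inner_right ℝ fun v => ?_
    rw [InnerProductSpace.toDual_symm_apply]
    rfl

end SCMNAux

open SCMNAux in
/-- The restriction of the Legendre map to `E \ {0}` is a bijection onto `E \ {0}`,
and at every `y ≠ 0` the Legendre map is differentiable with invertible derivative. -/
theorem legendreMap_bijOn_and_invertible_deriv
    {E : Type*} [NormedAddCommGroup E] [InnerProductSpace ℝ E] [FiniteDimensional ℝ E]
    (M : StronglyConvexMinkowskiNorm E) :
    Set.BijOn (legendreMap M) {(0 : E)}ᶜ {(0 : E)}ᶜ ∧
      ∀ y : E, y ≠ 0 →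
        ∃ D : E ≃L[ℝ] E, HasFDerivAt (legendreMap M) (D : E →L[ℝ] E) y := by
  constructor
  · refine ⟨fun y hy => ?_, fun a ha b hb hab => ?_, fun ξ hξ => ?_⟩
    · exact L_ne_zero M hy
    · exact L_injective M ha hb hab
    · obtain ⟨y, hy, hLy⟩ := L_surjective M hξ
      exact ⟨y, hy, hLy⟩
  · intro y hy
    set A := fderiv ℝ (fderiv ℝ (ff M)) y with hA
    set C : StrongDual ℝ E →L[ℝ] E :=
      (InnerProductSpace.toDual ℝ E).symm.toContinuousLinearEquiv.toContinuousLinearMap with hC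
    set B : E →L[ℝ] E := C.comp A with hB
    have hAd : HasFDerivAt (fderiv ℝ (ff M)) A y := fderiv2_hasFDerivAt M hy
    have hgrad : HasFDerivAt (gradient (ff M)) B y := by
      have h := C.hasFDerivAt.comp y hAd
      have heq : gradient (ff M) = ⇑C ∘ fderiv ℝ (ff M) := by
        funext z
        simp [gradient, hC]
      rw [heq]
      exact h
    have hBinner : ∀ w u : E, ⟪B w, u⟫ = A w u := by
      intro w u
      show ⟪(InnerProductSpace.toDual ℝ E).symm (A w), u⟫ = A w u
      exact InnerProductSpace.toDual_symm_apply
    have hBinj : Function.Injective B := by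
      intro u w huw
      by_contra hne
      have hd : u - w ≠ 0 := sub_ne_zero.2 hne
      have h1 : 0 < ⟪B (u - w), u - w⟫ := by
        rw [hBinner]
        exact hess_pos M hy hd
      rw [map_sub, huw, sub_self, inner_zero_left] at h1
      exact lt_irrefl _ h1
    have hbij : Function.Bijective B :=
      ⟨hBinj, (LinearMap.injective_iff_surjective (f := (B : E →ₗ[ℝ] E))).1 hBinj⟩
    let Beq : E ≃ₗ[ℝ] E := LinearEquiv.ofBijective (B : E →ₗ[ℝ] E) hbij
    refine ⟨Beq.toContinuousLinearEquiv, ?_⟩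
    have hcoe : ((Beq.toContinuousLinearEquiv : E ≃L[ℝ] E) : E →L[ℝ] E) = B := by
      ext v; rfl
    rw [hcoe]
    have hev : legendreMap M =ᶠ[nhds y] gradient (ff M) := by
      filter_upwards [isOpen_compl_singleton.mem_nhds hy] with z hz
      exact legendreMap_eq M hz
    exact hgrad.congr_of_eventuallyEq hev
end

section
/- Let F be a strongly convex Minkowski norm on E and L its Legendre map. Then for every y ∈ E \ {0}, the function ξ ↦ ½F*(ξ)² is differentiable at L(y) and its gradient there equals y; that is, the inverse of the Legendre map is given by the gradient of ½(F*)². -/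
open RealInnerProductSpace Classical

/-- The dual norm `F*(ξ) = sup {⟪ξ, v⟫ : F(v) ≤ 1}`. -/
noncomputable def dualNorm {E : Type*} [NormedAddCommGroup E] [InnerProductSpace ℝ E]
    (M : StronglyConvexMinkowskiNorm E) (ξ : E) : ℝ :=
  sSup {r : ℝ | ∃ v : E, M.F v ≤ 1 ∧ r = ⟪ξ, v⟫}

set_option linter.unusedSectionVars false

section Aux

variable {E : Type*} [NormedAddCommGroup E] [InnerProductSpace ℝ E] [FiniteDimensional ℝ E]

/-- `½ F²`. -/
noncomputable def halfSq (M : StronglyConvexMinkowskiNorm E) : E → ℝ :=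
  fun z => (1 / 2) * M.F z ^ 2

/-- The gradient of `½F²` (no case split at 0). -/
noncomputable def Lg (M : StronglyConvexMinkowskiNorm E) : E → E :=
  fun z => gradient (halfSq M) z

variable (M : StronglyConvexMinkowskiNorm E)

lemma F_zero : M.F 0 = 0 := by
  have h := M.homog 2 two_pos 0
  rw [smul_zero] at h
  linarith

lemma halfSq_nonneg (z : E) : 0 ≤ halfSq M z := by
  have := sq_nonneg (M.F z); simp [halfSq]; positivity

lemma halfSq_contDiffOn : ContDiffOn ℝ (⊤ : ℕ∞) (halfSq M) {(0 : E)}ᶜ := by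
  have h : ContDiffOn ℝ (⊤ : ℕ∞) (fun z => M.F z ^ 2) {(0 : E)}ᶜ := M.smooth.pow 2
  have := h.const_smul (1 / 2 : ℝ)
  unfold halfSq
  simpa [smul_eq_mul] using this

lemma halfSq_contDiffAt {z : E} (hz : z ≠ 0) : ContDiffAt ℝ (⊤ : ℕ∞) (halfSq M) z :=
  (halfSq_contDiffOn M).contDiffAt (by simp [hz, isOpen_compl_singleton.mem_nhds])

lemma halfSq_diffAt {z : E} (hz : z ≠ 0) : DifferentiableAt ℝ (halfSq M) z :=
  (halfSq_contDiffAt M hz).differentiableAt (by simp)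

lemma halfSq_hasGradient {z : E} (hz : z ≠ 0) : HasGradientAt (halfSq M) (Lg M z) z :=
  (halfSq_diffAt M hz).hasGradientAt

lemma toDual_Lg (z : E) :
    (InnerProductSpace.toDual ℝ E) (Lg M z) = fderiv ℝ (halfSq M) z :=
  (InnerProductSpace.toDual ℝ E).apply_symm_apply _

lemma fderiv_halfSq_apply {z : E} (v : E) :
    fderiv ℝ (halfSq M) z v = ⟪Lg M z, v⟫ := by
  rw [← toDual_Lg M]; rfl

lemma halfSq_smul {t : ℝ} (ht : 0 < t) (z : E) :
    halfSq M (t • z) = t ^ 2 * halfSq M z := by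
  by_cases hz : z = 0
  · simp [hz, halfSq, F_zero M]
  · simp only [halfSq, M.homog t ht z]; ring

lemma halfSq_hasFDerivAt {z : E} (hz : z ≠ 0) :
    HasFDerivAt (halfSq M) ((InnerProductSpace.toDual ℝ E) (Lg M z)) z := by
  rw [toDual_Lg]; exact (halfSq_diffAt M hz).hasFDerivAt

lemma euler {z : E} (hz : z ≠ 0) : ⟪Lg M z, z⟫ = 2 * halfSq M z := by
  have hc : HasDerivAt (fun t : ℝ => t • z) ((1 : ℝ) • z) 1 := (hasDerivAt_id 1).smul_const z
  have h1 : HasDerivAt (fun t : ℝ => halfSq M (t • z)) (⟪Lg M z, z⟫) 1 := by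
    have hz1 : HasFDerivAt (halfSq M) ((InnerProductSpace.toDual ℝ E) (Lg M z)) ((1:ℝ) • z) := by
      simpa using halfSq_hasFDerivAt M hz
    have := hz1.comp_hasDerivAt 1 hc
    simpa [Function.comp_def] using this
  have h2 : HasDerivAt (fun t : ℝ => t ^ 2 * halfSq M z) (2 * halfSq M z) 1 := by
    have := ((hasDerivAt_pow 2 (1 : ℝ))).mul_const (halfSq M z)
    simpa using this
  have heq : (fun t : ℝ => halfSq M (t • z)) =ᶠ[nhds (1 : ℝ)] fun t => t ^ 2 * halfSq M z := by
    filter_upwards [eventually_gt_nhds (by norm_num : (0:ℝ) < 1)] with t ht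
    exact halfSq_smul M ht z
  have h1' : HasDerivAt (fun t : ℝ => t ^ 2 * halfSq M z) (⟪Lg M z, z⟫) 1 :=
    h1.congr_of_eventuallyEq heq.symm
  exact h1'.unique h2

lemma Lg_smul {t : ℝ} (ht : 0 < t) {z : E} (hz : z ≠ 0) : Lg M (t • z) = t • Lg M z := by
  have htz : t • z ≠ 0 := smul_ne_zero ht.ne' hz
  -- compare fderivs of z ↦ halfSq (t • z) at z
  have hsm : HasFDerivAt (fun w : E => t • w) (t • ContinuousLinearMap.id ℝ E) z := by
    exact (hasFDerivAt_id z).const_smul t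
  have h1 : HasFDerivAt (fun w : E => halfSq M (t • w))
      (((InnerProductSpace.toDual ℝ E) (Lg M (t • z))).comp
        (t • ContinuousLinearMap.id ℝ E)) z :=
    (halfSq_hasFDerivAt M htz).comp z hsm
  have h2 : HasFDerivAt (fun w : E => halfSq M (t • w))
      (t ^ 2 • (InnerProductSpace.toDual ℝ E) (Lg M z)) z := by
    have := (halfSq_hasFDerivAt M hz).const_smul (t ^ 2)
    refine HasFDerivAt.congr_of_eventuallyEq this ?_
    filter_upwards with w
    simp [halfSq_smul M ht w, smul_eq_mul]
  have h12 := h1.unique h2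
  apply ext_inner_right ℝ
  intro v
  have := congrArg (fun (L : E →L[ℝ] ℝ) => L v) h12
  simp only [ContinuousLinearMap.comp_apply, ContinuousLinearMap.smul_apply,
    ContinuousLinearMap.id_apply, InnerProductSpace.toDual_apply_apply] at this
  rw [real_inner_smul_left]
  have ht' : t ≠ 0 := ht.ne'
  have : t * ⟪Lg M (t • z), v⟫ = t ^ 2 * ⟪Lg M z, v⟫ := by
    simpa [real_inner_smul_right] using this
  field_simp at this ⊢
  nlinarith [this]


/-- second derivative -/
noncomputable def D2 (M : StronglyConvexMinkowskiNorm E) (z : E) : E →L[ℝ] E →L[ℝ] ℝ :=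
  fderiv ℝ (fderiv ℝ (halfSq M)) z

lemma fderiv_halfSq_contDiffAt {z : E} (hz : z ≠ 0) :
    ContDiffAt ℝ (⊤ : ℕ∞) (fderiv ℝ (halfSq M)) z :=
  (halfSq_contDiffAt M hz).fderiv_right (by simp)

lemma hasFDerivAt_fderiv_halfSq {z : E} (hz : z ≠ 0) :
    HasFDerivAt (fderiv ℝ (halfSq M)) (D2 M z) z :=
  ((fderiv_halfSq_contDiffAt M hz).differentiableAt (by simp)).hasFDerivAt

lemma D2_apply_eq (z : E) (v w : E) :
    D2 M z v w = iteratedFDeriv ℝ 2 (halfSq M) z ![v, w] := by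
  rw [iteratedFDeriv_two_apply]
  simp [D2]

lemma D2_pos {z : E} (hz : z ≠ 0) {v : E} (hv : v ≠ 0) : 0 < D2 M z v v := by
  rw [D2_apply_eq]
  exact M.hess_posdef z hz v hv

lemma D2_symm {z : E} (hz : z ≠ 0) (v w : E) : D2 M z v w = D2 M z w v := by
  refine second_derivative_symmetric_of_eventually (f := halfSq M) ?_ (hasFDerivAt_fderiv_halfSq M hz) v w
  filter_upwards [isOpen_compl_singleton.eventually_mem (by simpa using hz : z ∈ ({0}ᶜ : Set E))]
    with u hu
  exact (halfSq_diffAt M (by simpa using hu)).hasFDerivAt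

lemma fund_ineq {w : E} (hw : w ≠ 0) (z : E) :
    ⟪Lg M w, z⟫ ≤ halfSq M z + halfSq M w := by
  by_cases hzw : z = w
  · subst hzw
    rw [euler M hw]; linarith
  by_cases hc : ∃ c : ℝ, c ≤ 0 ∧ z = c • w
  · obtain ⟨c, hc0, rfl⟩ := hc
    have h1 : ⟪Lg M w, c • w⟫ = c * (2 * halfSq M w) := by
      rw [real_inner_smul_right, euler M hw]
    have h2 := halfSq_nonneg M (c • w)
    have h3 := halfSq_nonneg M w
    nlinarith
  · set v := z - w with hv
    have hvne : v ≠ 0 := sub_ne_zero_of_ne hzw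
    set p : ℝ → E := fun t => w + t • v with hp
    have hpne : ∀ t ∈ Set.Icc (0:ℝ) 1, p t ≠ 0 := by
      intro t ht h0
      rcases eq_or_lt_of_le ht.1 with h | h
      · apply hw; simpa [p, ← h] using h0
      · apply hc
        refine ⟨(t - 1) / t, by
          apply div_nonpos_of_nonpos_of_nonneg <;> linarith [ht.2], ?_⟩
        have : t • z = (t - 1) • w := by
          have : w + t • (z - w) = 0 := h0
          rw [smul_sub] at this
          rw [sub_smul, one_smul]
          abel_nf
          abel_nf at this
          linear_combination (norm := module) this
        have := congrArg (fun u => (t⁻¹ : ℝ) • u) this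
        simpa [smul_smul, inv_mul_cancel₀ h.ne', div_eq_inv_mul, mul_comm] using this
    set G : ℝ → ℝ := fun t => fderiv ℝ (halfSq M) (p t) v with hG
    have hpderiv : ∀ t : ℝ, HasDerivAt p v t := by
      intro t
      simpa [p] using ((hasDerivAt_id t).smul_const v).const_add w
    have hgderiv : ∀ t ∈ Set.Icc (0:ℝ) 1, HasDerivAt (fun s => halfSq M (p s)) (G t) t := by
      intro t ht
      have := (halfSq_hasFDerivAt M (hpne t ht)).comp_hasDerivAt t (hpderiv t)
      simpa [G, ← toDual_Lg M, Function.comp_def] using this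
    have hGderiv : ∀ t ∈ Set.Icc (0:ℝ) 1, HasDerivAt G (D2 M (p t) v v) t := by
      intro t ht
      have h1 : HasDerivAt (fun s => fderiv ℝ (halfSq M) (p s)) (D2 M (p t) v) t :=
        (hasFDerivAt_fderiv_halfSq M (hpne t ht)).comp_hasDerivAt t (hpderiv t)
      have := (ContinuousLinearMap.apply ℝ ℝ v).hasFDerivAt.comp_hasDerivAt t h1
      simpa [G, Function.comp_def] using this
    have hmono : StrictMonoOn G (Set.Icc (0:ℝ) 1) := by
      refine strictMonoOn_of_deriv_pos (convex_Icc 0 1) ?_ ?_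
      · exact fun t ht => ((hGderiv t ht).continuousAt).continuousWithinAt
      · intro t ht
        rw [interior_Icc] at ht
        rw [(hGderiv t (Set.mem_Icc_of_Ioo ht)).deriv]
        exact D2_pos M (hpne t (Set.mem_Icc_of_Ioo ht)) hvne
    obtain ⟨c, hc01, hcslope⟩ := exists_hasDerivAt_eq_slope (fun s => halfSq M (p s)) G
      zero_lt_one
      (fun t ht => ((hgderiv t ht).continuousAt).continuousWithinAt)
      (fun t ht => hgderiv t (Set.mem_Icc_of_Ioo ht))
    have hp0 : p 0 = w := by simp [p]
    have hp1 : p 1 = z := by simp [p, v]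
    have hG0 : G 0 = ⟪Lg M w, z⟫ - 2 * halfSq M w := by
      rw [hG]
      simp only [hp0]
      rw [fderiv_halfSq_apply M]
      rw [hv, inner_sub_right, euler M hw]
    have hlt : G 0 < G c :=
      hmono (Set.left_mem_Icc.2 zero_le_one) (Set.mem_Icc_of_Ioo hc01) hc01.1
    rw [hp0, hp1] at hcslope
    have : G c = halfSq M z - halfSq M w := by rw [hcslope]; ring
    rw [this, hG0] at hlt
    linarith

end Aux


section Aux2
variable {E : Type*} [NormedAddCommGroup E] [InnerProductSpace ℝ E] [FiniteDimensional ℝ E]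
variable (M : StronglyConvexMinkowskiNorm E)

/-- the inverse of `toDual` as a genuinely ℝ-linear continuous map -/
noncomputable def dualCLM (E : Type*) [NormedAddCommGroup E] [InnerProductSpace ℝ E]
    [FiniteDimensional ℝ E] : (E →L[ℝ] ℝ) →L[ℝ] E :=
  LinearMap.toContinuousLinearMap
    { toFun := fun l => (InnerProductSpace.toDual ℝ E).symm l
      map_add' := fun a b => by simp
      map_smul' := fun r a => by
        simp only [RingHom.id_apply]
        apply ext_inner_right ℝ
        intro v
        rw [InnerProductSpace.toDual_symm_apply, real_inner_smul_left,
          InnerProductSpace.toDual_symm_apply]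
        rfl }

@[simp] lemma dualCLM_apply {E : Type*} [NormedAddCommGroup E] [InnerProductSpace ℝ E]
    [FiniteDimensional ℝ E] (l : E →L[ℝ] ℝ) :
    dualCLM E l = (InnerProductSpace.toDual ℝ E).symm l := rfl

lemma dual_Lg {w : E} (hw : w ≠ 0) : dualNorm M (Lg M w) = M.F w := by
  have hFw : 0 < M.F w := M.pos w hw
  have hub : ∀ r ∈ {r : ℝ | ∃ v : E, M.F v ≤ 1 ∧ r = ⟪Lg M w, v⟫}, r ≤ M.F w := by
    rintro r ⟨v, hv1, rfl⟩
    have h := fund_ineq M hw (M.F w • v)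
    rw [halfSq_smul M hFw v, real_inner_smul_right] at h
    have hFv2 : M.F v ^ 2 ≤ 1 := by nlinarith [M.nonneg v]
    have hkey : M.F w * ⟪Lg M w, v⟫ ≤ M.F w * M.F w := by
      unfold halfSq at h
      nlinarith [mul_le_mul_of_nonneg_left hFv2 (sq_nonneg (M.F w))]
    exact le_of_mul_le_mul_left hkey hFw
  have h0mem : (0 : ℝ) ∈ {r : ℝ | ∃ v : E, M.F v ≤ 1 ∧ r = ⟪Lg M w, v⟫} :=
    ⟨0, by simp [F_zero M], by simp⟩
  apply le_antisymm
  · exact csSup_le ⟨0, h0mem⟩ hub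
  · apply le_csSup ⟨M.F w, hub⟩
    refine ⟨(M.F w)⁻¹ • w, ?_, ?_⟩
    · rw [M.homog _ (inv_pos.2 hFw) w, inv_mul_cancel₀ hFw.ne']
    · rw [real_inner_smul_right, euler M hw]
      unfold halfSq
      field_simp

end Aux2

/-- For every `y ≠ 0`, the function `ξ ↦ ½F*(ξ)²` is differentiable at `L(y)` with
gradient `y` there: the inverse of the Legendre map is the gradient of `½(F*)²`. -/
theorem hasGradientAt_half_dualNorm_sq_legendreMap
    {E : Type*} [NormedAddCommGroup E] [InnerProductSpace ℝ E] [FiniteDimensional ℝ E]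
    (M : StronglyConvexMinkowskiNorm E) (y : E) (hy : y ≠ 0) :
    HasGradientAt (fun ξ : E => (1 / 2) * dualNorm M ξ ^ 2) y (legendreMap M y) := by
  have hLM : legendreMap M y = Lg M y := by
    rw [legendreMap, if_neg hy]; rfl
  -- the derivative of the Legendre map at y
  have hD2 := hasFDerivAt_fderiv_halfSq M hy
  set A : E →L[ℝ] E := (dualCLM E).comp (D2 M y) with hA_def
  have hA : HasFDerivAt (Lg M) A y := by
    have h := ((dualCLM E).hasFDerivAt).comp y hD2
    exact h
  have hAinner : ∀ u v : E, ⟪A u, v⟫ = D2 M y u v := by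
    intro u v
    have hau : A u = (InnerProductSpace.toDual ℝ E).symm (D2 M y u) := rfl
    rw [hau, InnerProductSpace.toDual_symm_apply]
  have hAinj : Function.Injective A := by
    intro u v huv
    by_contra hne
    have huv0 : u - v ≠ 0 := sub_ne_zero_of_ne hne
    have hpos := D2_pos M hy huv0
    have hz : A (u - v) = 0 := by rw [map_sub, huv, sub_self]
    have h2 := hAinner (u - v) (u - v)
    rw [hz, inner_zero_left] at h2
    rw [← h2] at hpos
    exact lt_irrefl 0 hpos
  have hAsurj : Function.Surjective A :=
    (LinearMap.injective_iff_surjective (f := (A : E →ₗ[ℝ] E))).1 hAinj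
  set A' : E ≃L[ℝ] E :=
    (LinearEquiv.ofBijective (A : E →ₗ[ℝ] E) ⟨hAinj, hAsurj⟩).toContinuousLinearEquiv with hA'
  have hA'coe : (A' : E →L[ℝ] E) = A := by
    ext u; rfl
  -- Lg is C^∞ at y
  have hLgCD : ContDiffAt ℝ (⊤ : ℕ∞) (Lg M) y := by
    have h1 : ContDiffAt ℝ (⊤ : ℕ∞) (fun z => dualCLM E (fderiv ℝ (halfSq M) z)) y :=
      ((dualCLM E).contDiff.contDiffAt).comp y (fderiv_halfSq_contDiffAt M hy)
    exact h1
  have hstrict : HasStrictFDerivAt (Lg M) (A' : E →L[ℝ] E) y :=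
    hLgCD.hasStrictFDerivAt' (hA'coe ▸ hA) (by simp)
  set φ := hstrict.localInverse (Lg M) A' y with hφ
  have hφy : φ (Lg M y) = y := hstrict.localInverse_apply_image
  have hright : ∀ᶠ ξ in nhds (Lg M y), Lg M (φ ξ) = ξ := hstrict.eventually_right_inverse
  have hcont : ContinuousAt φ (Lg M y) := hstrict.localInverse_continuousAt
  have hφne : ∀ᶠ ξ in nhds (Lg M y), φ ξ ≠ 0 := by
    have : {0}ᶜ ∈ nhds (φ (Lg M y)) := by
      rw [hφy]; exact isOpen_compl_singleton.mem_nhds (by simpa using hy)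
    filter_upwards [hcont.preimage_mem_nhds this] with ξ hξ
    simpa using hξ
  have heq : (fun ξ : E => (1 / 2) * dualNorm M ξ ^ 2) =ᶠ[nhds (Lg M y)]
      fun ξ => halfSq M (φ ξ) := by
    filter_upwards [hright, hφne] with ξ h1 h2
    have hd := dual_Lg M h2
    rw [h1] at hd
    rw [hd]; rfl
  have hφderiv : HasFDerivAt φ (A'.symm : E →L[ℝ] E) (Lg M y) :=
    hstrict.to_localInverse.hasFDerivAt
  have hhs : HasFDerivAt (halfSq M) ((InnerProductSpace.toDual ℝ E) (Lg M y)) (φ (Lg M y)) := by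
    rw [hφy]; exact halfSq_hasFDerivAt M hy
  have hcomp : HasFDerivAt (fun ξ => halfSq M (φ ξ))
      (((InnerProductSpace.toDual ℝ E) (Lg M y)).comp (A'.symm : E →L[ℝ] E)) (Lg M y) :=
    hhs.comp (Lg M y) hφderiv
  have hfinal : HasFDerivAt (fun ξ : E => (1 / 2) * dualNorm M ξ ^ 2)
      (((InnerProductSpace.toDual ℝ E) (Lg M y)).comp (A'.symm : E →L[ℝ] E)) (Lg M y) :=
    hcomp.congr_of_eventuallyEq heq
  -- Euler identity for Lg : A y = Lg M y
  have hAy : A y = Lg M y := by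
    have hc : HasDerivAt (fun t : ℝ => t • y) y 1 := by
      simpa using (hasDerivAt_id (1:ℝ)).smul_const y
    have hA1 : HasFDerivAt (Lg M) A ((1:ℝ) • y) := by simpa using hA
    have h1 : HasDerivAt (fun t : ℝ => Lg M (t • y)) (A y) 1 := by
      simpa [Function.comp_def] using hA1.comp_hasDerivAt 1 hc
    have h2 : HasDerivAt (fun t : ℝ => t • Lg M y) (Lg M y) 1 := by
      simpa using (hasDerivAt_id (1:ℝ)).smul_const (Lg M y)
    have heq2 : (fun t : ℝ => Lg M (t • y)) =ᶠ[nhds (1:ℝ)] fun t => t • Lg M y := by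
      filter_upwards [eventually_gt_nhds (by norm_num : (0:ℝ) < 1)] with t ht
      exact Lg_smul M ht hy
    exact (h1.congr_of_eventuallyEq heq2.symm).unique h2
  -- the derivative equals toDual y
  have hkey : ((InnerProductSpace.toDual ℝ E) (Lg M y)).comp (A'.symm : E →L[ℝ] E)
      = (InnerProductSpace.toDual ℝ E) y := by
    ext h
    have hu : A (A'.symm h) = h := by
      have := A'.apply_symm_apply h
      rwa [← hA'coe]
    calc ((InnerProductSpace.toDual ℝ E) (Lg M y)) (A'.symm h)
        = ⟪Lg M y, A'.symm h⟫ := rfl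
      _ = ⟪A y, A'.symm h⟫ := by rw [hAy]
      _ = D2 M y y (A'.symm h) := hAinner y (A'.symm h)
      _ = D2 M y (A'.symm h) y := D2_symm M hy _ _
      _ = ⟪A (A'.symm h), y⟫ := (hAinner _ y).symm
      _ = ⟪y, A (A'.symm h)⟫ := real_inner_comm _ _
      _ = ⟪y, h⟫ := by rw [hu]
      _ = (InnerProductSpace.toDual ℝ E) y h := rfl
  rw [hLM]
  rw [hasGradientAt_iff_hasFDerivAt]
  rw [← hkey]
  exact hfinal
end

section
/- Diamagnetic inequality: let ψ : ℝⁿ → ℂ be differentiable at x with ψ(x) ≠ 0, let A(x) : ℝⁿ → ℝ be a continuous linear functional, and let N be any norm on the space of continuous real-linear functionals ℝⁿ → ℝ. Write Re(D_Aψ)(x) and Im(D_Aψ)(x) for the real covectors v ↦ Re((D_Aψ)(x)(v)) and v ↦ Im((D_Aψ)(x)(v)). Then N(d|ψ|(x)) ≤ sqrt( N(Re(D_Aψ)(x))² + N(Im(D_Aψ)(x))² ). -/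
/-!
Where `ψ x ≠ 0`, the derivative of `|ψ|` is `⟪ψ x / |ψ x|, Dψ(x)·⟫_ℝ`. The magnetic term
`-i A ψ` is pointwise orthogonal to `ψ`, so `Dψ` may be replaced by `D_A ψ` there, and then
`d|ψ|(x) = a • Re(D_A ψ)(x) + b • Im(D_A ψ)(x)` with `(a, b) = (Re ψ(x), Im ψ(x)) / |ψ(x)|` a unit
vector. The triangle inequality for `N` and Cauchy–Schwarz in `ℝ²` finish the proof.
-/

open Complex

section

variable {E : Type*} [NormedAddCommGroup E] [NormedSpace ℝ E]

theorem HasFDerivAt.norm {F : Type*} [NormedAddCommGroup F] [InnerProductSpace ℝ F]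
    {f : E → F} {f' : E →L[ℝ] F} {x : E} (hf : HasFDerivAt f f' x) (h0 : f x ≠ 0) :
    HasFDerivAt (‖f ·‖) (‖f x‖⁻¹ • (innerSL ℝ (f x)).comp f') x := by
  have h := hf.norm_sq.sqrt (by positivity)
  simp only [Real.sqrt_sq (norm_nonneg _)] at h
  convert h using 1
  rw [← Nat.cast_smul_eq_nsmul ℝ, smul_smul, Nat.cast_ofNat]
  congr 1
  field_simp

noncomputable def covariantFDeriv (A : E →L[ℝ] ℝ) (ψ : E → ℂ) (x : E) : E →L[ℝ] ℂ :=
  fderiv ℝ ψ x - A.smulRight (I * ψ x)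

theorem Complex.innerSL_comp (z : ℂ) (L : E →L[ℝ] ℂ) :
    (innerSL ℝ z).comp L = z.re • reCLM.comp L + z.im • imCLM.comp L := by
  ext v
  simp [Complex.inner]
  ring

theorem innerSL_comp_covariantFDeriv (A : E →L[ℝ] ℝ) (ψ : E → ℂ) (x : E) :
    (innerSL ℝ (ψ x)).comp (covariantFDeriv A ψ x) = (innerSL ℝ (ψ x)).comp (fderiv ℝ ψ x) := by
  ext v
  simp [covariantFDeriv]
  ring

theorem hasFDerivAt_norm_covariantFDeriv (A : E →L[ℝ] ℝ) {ψ : E → ℂ} {x : E}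
    (hψ : DifferentiableAt ℝ ψ x) (h0 : ψ x ≠ 0) :
    HasFDerivAt (‖ψ ·‖) (((ψ x).re / ‖ψ x‖) • reCLM.comp (covariantFDeriv A ψ x) +
      ((ψ x).im / ‖ψ x‖) • imCLM.comp (covariantFDeriv A ψ x)) x := by
  convert hψ.hasFDerivAt.norm h0 using 1
  rw [← innerSL_comp_covariantFDeriv A, Complex.innerSL_comp, smul_add, smul_smul, smul_smul,
    div_eq_inv_mul, div_eq_inv_mul]

end

theorem Seminorm.apply_smul_add_smul_le {E : Type*} [AddCommGroup E] [Module ℝ E]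
    (p : Seminorm ℝ E) (a b : ℝ) (f g : E) :
    p (a • f + b • g) ≤ √(a ^ 2 + b ^ 2) * √(p f ^ 2 + p g ^ 2) := by
  have h_tri : p (a • f + b • g) ≤ |a| * p f + |b| * p g := by
    simpa [map_smul_eq_mul] using map_add_le_add p (a • f) (b • g)
  have h_cs : (|a| * p f + |b| * p g) ^ 2 ≤ (a ^ 2 + b ^ 2) * (p f ^ 2 + p g ^ 2) := by
    nlinarith [sq_nonneg (|a| * p g - |b| * p f), sq_abs a, sq_abs b]
  rw [← Real.sqrt_mul (by positivity), Real.le_sqrt (apply_nonneg p _) (by positivity)]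
  exact (pow_le_pow_left₀ (apply_nonneg p _) h_tri 2).trans h_cs

theorem diamagnetic_inequality_general (n : ℕ)
    (ψ : EuclideanSpace ℝ (Fin n) → ℂ) (x : EuclideanSpace ℝ (Fin n))
    (hψ : DifferentiableAt ℝ ψ x) (hne : ψ x ≠ 0)
    (A : EuclideanSpace ℝ (Fin n) →L[ℝ] ℝ)
    (N : (EuclideanSpace ℝ (Fin n) →L[ℝ] ℝ) → ℝ)
    (hN_add : ∀ f g : EuclideanSpace ℝ (Fin n) →L[ℝ] ℝ, N (f + g) ≤ N f + N g)
    (hN_smul : ∀ (c : ℝ) (f : EuclideanSpace ℝ (Fin n) →L[ℝ] ℝ), N (c • f) = |c| * N f)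
    (d : EuclideanSpace ℝ (Fin n) →L[ℝ] ℝ)
    (hd : HasFDerivAt (fun y => ‖ψ y‖) d x) :
    N d ≤ Real.sqrt
      (N (Complex.reCLM.comp (fderiv ℝ ψ x - A.smulRight (Complex.I * ψ x))) ^ 2 +
       N (Complex.imCLM.comp (fderiv ℝ ψ x - A.smulRight (Complex.I * ψ x))) ^ 2) := by
  let p : Seminorm ℝ (EuclideanSpace ℝ (Fin n) →L[ℝ] ℝ) :=
    Seminorm.of N hN_add (by simpa using hN_smul)
  have h_unit : ((ψ x).re / ‖ψ x‖) ^ 2 + ((ψ x).im / ‖ψ x‖) ^ 2 = 1 := by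
    rw [div_pow, div_pow, ← add_div, ← Complex.sq_norm_sub_sq_re, add_sub_cancel,
      div_self (by positivity)]
  rw [hd.unique (hasFDerivAt_norm_covariantFDeriv A hψ hne)]
  have h := p.apply_smul_add_smul_le ((ψ x).re / ‖ψ x‖) ((ψ x).im / ‖ψ x‖)
    (reCLM.comp (covariantFDeriv A ψ x)) (imCLM.comp (covariantFDeriv A ψ x))
  rwa [h_unit, Real.sqrt_one, one_mul] at h

/-- Diamagnetic inequality: if `ψ` is differentiable at `x` with `ψ(x) ≠ 0`,
`A(x)` is a real covector at `x`, and `N` is any norm on the space of real covectors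
on `ℝⁿ`, then for the derivative `d` of `y ↦ |ψ(y)|` at `x`,
`N(d|ψ|(x)) ≤ sqrt(N(Re(D_Aψ)(x))² + N(Im(D_Aψ)(x))²)`, where
`(D_Aψ)(x) = Dψ(x) − i A(x) ψ(x)`. -/
theorem diamagnetic_inequality (n : ℕ)
    (ψ : EuclideanSpace ℝ (Fin n) → ℂ) (x : EuclideanSpace ℝ (Fin n))
    (hψ : DifferentiableAt ℝ ψ x) (hne : ψ x ≠ 0)
    (A : EuclideanSpace ℝ (Fin n) →L[ℝ] ℝ)
    (N : (EuclideanSpace ℝ (Fin n) →L[ℝ] ℝ) → ℝ)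
    (hN_add : ∀ f g : EuclideanSpace ℝ (Fin n) →L[ℝ] ℝ, N (f + g) ≤ N f + N g)
    (hN_smul : ∀ (c : ℝ) (f : EuclideanSpace ℝ (Fin n) →L[ℝ] ℝ), N (c • f) = |c| * N f)
    (hN_def : ∀ f : EuclideanSpace ℝ (Fin n) →L[ℝ] ℝ, N f = 0 ↔ f = 0)
    (d : EuclideanSpace ℝ (Fin n) →L[ℝ] ℝ)
    (hd : HasFDerivAt (fun y => ‖ψ y‖) d x) :
    N d ≤ Real.sqrt
      (N (Complex.reCLM.comp (fderiv ℝ ψ x - A.smulRight (Complex.I * ψ x))) ^ 2 +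
       N (Complex.imCLM.comp (fderiv ℝ ψ x - A.smulRight (Complex.I * ψ x))) ^ 2) :=
  diamagnetic_inequality_general n ψ x hψ hne A N hN_add hN_smul d hd
end
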